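/- arXiv:1403.3925 — 5 statements merged into one kernel-verified Lean document; each statement's English description precedes it below -/
import Mathlib

section
/- With W, D as in the GeneRank model and 0 < α < 1, every eigenvalue λ of S_α = I - α D^{-1/2} W D^{-1/2} satisfies 1 - α ≤ λ ≤ 1 + α. -/
/-!
The normalised matrix `D^{-1/2} W D^{-1/2}` is similar, via `D^{1/2}`, to `D⁻¹ W`, a nonnegative
matrix whose row sums are at most `1`. Its `L∞` operator norm is therefore at most `1`, which bounds
its spectrum, so every eigenvalue `λ` of the normalised matrix has `|λ| ≤ 1`, and the eigenvalues
`1 - α λ` of `S_α` lie in `[1 - α, 1 + α]`.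
-/

open Matrix

theorem spectrum.exists_eq_one_sub_smul_of_mem {𝕜 A : Type*} [Field 𝕜] [Ring A] [Algebra 𝕜 A]
    {a : A} {α μ : 𝕜} (hα : α ≠ 0) (hμ : μ ∈ spectrum 𝕜 (1 - α • a)) :
    ∃ ν ∈ spectrum 𝕜 a, μ = 1 - α * ν := by
  rw [← map_one (algebraMap 𝕜 A), ← spectrum.singleton_sub_eq,
    show α • a = Units.mk0 α hα • a from rfl, spectrum.unit_smul_eq_smul] at hμ
  obtain ⟨_, rfl, _, ⟨ν, hν, rfl⟩, rfl⟩ := hμ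
  exact ⟨ν, hν, rfl⟩

namespace Matrix

variable {ι : Type*} [Fintype ι] [DecidableEq ι]

theorem spectrum_diagonal_mul_mul_diagonal {K : Type*} [Field K] {s : ι → K}
    (hs : ∀ i, s i ≠ 0) (A : Matrix ι ι K) :
    spectrum K (diagonal s * A * diagonal s) = spectrum K (diagonal (s * s) * A) := by
  have hinv : diagonal s * diagonal s⁻¹ = 1 := by
    rw [diagonal_mul_diagonal, ← diagonal_one]
    exact congrArg diagonal (funext fun i => mul_inv_cancel₀ (hs i))
  have hinv' : diagonal s⁻¹ * diagonal s = 1 := by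
    rw [diagonal_mul_diagonal, ← diagonal_one]
    exact congrArg diagonal (funext fun i => inv_mul_cancel₀ (hs i))
  let u : (Matrix ι ι K)ˣ := ⟨diagonal s, diagonal s⁻¹, hinv, hinv'⟩
  have hconj : diagonal s * A * diagonal s =
      (↑u⁻¹ : Matrix ι ι K) * (diagonal (s * s) * A) * (u : Matrix ι ι K) := by
    simp only [u, Units.inv_mk, Units.val_mk, ← mul_assoc]
    rw [show diagonal (s * s) = diagonal s * diagonal s from (diagonal_mul_diagonal s s).symm,
      ← mul_assoc, hinv', one_mul]
  rw [hconj, spectrum.units_conjugate']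

open scoped Matrix.Norms.Operator in
theorem abs_le_one_of_mem_spectrum_of_sum_le_one {B : Matrix ι ι ℝ} (hB : ∀ i j, 0 ≤ B i j)
    (hrow : ∀ i, ∑ j, B i j ≤ 1) {μ : ℝ} (hμ : μ ∈ spectrum ℝ B) : |μ| ≤ 1 := by
  cases isEmpty_or_nonempty ι
  · simp [spectrum.of_subsingleton] at hμ
  have hnorm : ‖B‖ ≤ 1 := by
    rw [linfty_opNorm_def, NNReal.coe_le_one, Finset.sup_le_iff]
    intro i _
    rw [← NNReal.coe_le_one, NNReal.coe_sum]
    simpa only [coe_nnnorm, Real.norm_of_nonneg (hB i _)] using hrow i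
  exact (spectrum.norm_le_norm_of_mem hμ).trans hnorm

end Matrix

theorem stmt_5_general (n : ℕ) (W : Matrix (Fin n) (Fin n) ℝ)
    (hWnn : ∀ i j, 0 ≤ W i j) (α : ℝ) (hα0 : 0 < α)
    (d : Fin n → ℝ) (hd : ∀ i, d i = if 0 < ∑ j, W i j then ∑ j, W i j else 1)
    (Dhalf : Matrix (Fin n) (Fin n) ℝ)
    (hDhalf : Dhalf = Matrix.diagonal fun i => (Real.sqrt (d i))⁻¹) :
    ∀ μ ∈ spectrum ℝ ((1 : Matrix (Fin n) (Fin n) ℝ) - α • (Dhalf * W * Dhalf)),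
      1 - α ≤ μ ∧ μ ≤ 1 + α := by
  intro μ hμ
  have hd_pos : ∀ i, 0 < d i := fun i => by rw [hd i]; split_ifs with h; exacts [h, one_pos]
  have hrow_le : ∀ i, ∑ j, W i j ≤ d i := fun i => by rw [hd i]; split_ifs <;> linarith
  obtain ⟨ν, hν, rfl⟩ := spectrum.exists_eq_one_sub_smul_of_mem hα0.ne' hμ
  have hsq : (fun i => (√(d i))⁻¹) * (fun i => (√(d i))⁻¹) = d⁻¹ := funext fun i => by
    simp [← mul_inv, Real.mul_self_sqrt (hd_pos i).le]
  have hsqrt_inv_ne : ∀ i, (√(d i))⁻¹ ≠ 0 := fun i => inv_ne_zero (Real.sqrt_ne_zero'.2 (hd_pos i))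
  rw [hDhalf, spectrum_diagonal_mul_mul_diagonal hsqrt_inv_ne, hsq] at hν
  have hν_le : |ν| ≤ 1 := by
    refine abs_le_one_of_mem_spectrum_of_sum_le_one (fun i j => ?_) (fun i => ?_) hν
    · simpa [diagonal_mul] using mul_nonneg (inv_nonneg.2 (hd_pos i).le) (hWnn i j)
    · simpa [diagonal_mul, ← Finset.mul_sum, inv_mul_le_iff₀ (hd_pos i)] using hrow_le i
  obtain ⟨hν_lower, hν_upper⟩ := abs_le.1 hν_le
  constructor <;> nlinarith

theorem stmt_5 (n : ℕ) (W : Matrix (Fin n) (Fin n) ℝ) (hW : W.IsSymm)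
    (hWnn : ∀ i j, 0 ≤ W i j) (α : ℝ) (hα0 : 0 < α) (hα1 : α < 1)
    (d : Fin n → ℝ) (hd : ∀ i, d i = if 0 < ∑ j, W i j then ∑ j, W i j else 1)
    (Dhalf : Matrix (Fin n) (Fin n) ℝ)
    (hDhalf : Dhalf = Matrix.diagonal fun i => (Real.sqrt (d i))⁻¹) :
    ∀ μ ∈ spectrum ℝ ((1 : Matrix (Fin n) (Fin n) ℝ) - α • (Dhalf * W * Dhalf)),
      1 - α ≤ μ ∧ μ ≤ 1 + α :=
  stmt_5_general n W hWnn α hα0 d hd Dhalf hDhalf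
end

section
/- With W ≠ 0 symmetric nonnegative and D as in the GeneRank model, for 0 < α < 1 the smallest eigenvalue of S_α = I - α D^{-1/2} W D^{-1/2} equals exactly 1 - α. -/
/-!
With `s = D^{-1/2}` and `N = s W s`, the quadratic form of `N` is `∑ W i j (s v)_i (s v)_j`, which
is at most `∑ (row sum)_i (s v)_i² ≤ ∑ d_i (s v)_i² = ‖v‖²` because `2ab ≤ a² + b²` and `W` is
symmetric and nonnegative. So every eigenvalue of `N` is at most `1` and every eigenvalue of
`1 - α N` is at least `1 - α`. The bound is attained: `D^{1/2} x`, with `x` the indicator of the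
nonzero rows, is fixed by `N`, since `W x` is the vector of row sums.
-/

open Matrix Finset

theorem Matrix.mem_spectrum_iff_exists_mulVec_eq_smul {K ι : Type*} [Field K] [Fintype ι]
    [DecidableEq ι] {A : Matrix ι ι K} {μ : K} :
    μ ∈ spectrum K A ↔ ∃ v, v ≠ 0 ∧ A *ᵥ v = μ • v := by
  rw [← spectrum_toLin', ← Module.End.hasEigenvalue_iff_mem_spectrum]
  constructor
  · intro h
    obtain ⟨v, hv⟩ := h.exists_hasEigenvector
    exact ⟨v, hv.2, hv.apply_eq_smul⟩
  · rintro ⟨v, hv0, hv⟩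
    exact Module.End.hasEigenvalue_of_hasEigenvector ⟨Module.End.mem_eigenspace_iff.mpr hv, hv0⟩

theorem Matrix.le_of_mem_spectrum_of_forall_le_dotProduct_mulVec {ι : Type*} [Fintype ι]
    [DecidableEq ι] {A : Matrix ι ι ℝ} {c μ : ℝ} (hA : ∀ v, c * (v ⬝ᵥ v) ≤ v ⬝ᵥ A *ᵥ v)
    (hμ : μ ∈ spectrum ℝ A) : c ≤ μ := by
  obtain ⟨v, hv0, hv⟩ := mem_spectrum_iff_exists_mulVec_eq_smul.mp hμ
  have hpos : 0 < v ⬝ᵥ v := by simpa using dotProduct_self_star_pos_iff.mpr hv0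
  have h := hA v
  rw [hv, dotProduct_smul, smul_eq_mul] at h
  exact le_of_mul_le_mul_right h hpos

section NormalizedAdjacency

variable {ι : Type*} [Fintype ι] {W : Matrix ι ι ℝ}

theorem dotProduct_mulVec_le_sum_rowSum_mul_sq (hW : W.IsSymm) (hWnn : ∀ i j, 0 ≤ W i j)
    (u : ι → ℝ) : u ⬝ᵥ W *ᵥ u ≤ ∑ i, (∑ j, W i j) * u i ^ 2 := by
  have hexpand : u ⬝ᵥ W *ᵥ u = ∑ i, ∑ j, W i j * u i * u j := by
    simp only [dotProduct, mulVec, mul_sum]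
    exact sum_congr rfl fun i _ => sum_congr rfl fun j _ => by ring
  have hswap : ∑ i, ∑ j, W i j * u j ^ 2 = ∑ i, (∑ j, W i j) * u i ^ 2 := by
    rw [sum_comm]
    simp only [sum_mul, hW.apply]
  have hamgm : 2 * ∑ i, ∑ j, W i j * u i * u j ≤ ∑ i, ∑ j, (W i j * u i ^ 2 + W i j * u j ^ 2) := by
    rw [mul_sum]
    refine sum_le_sum fun i _ => ?_
    rw [mul_sum]
    exact sum_le_sum fun j _ => by nlinarith [mul_nonneg (hWnn i j) (sq_nonneg (u i - u j))]
  simp only [sum_add_distrib, hswap, ← sum_mul] at hamgm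
  linarith

theorem Matrix.IsSymm.apply_eq_zero_of_rowSum_eq_zero (hW : W.IsSymm) (hWnn : ∀ i j, 0 ≤ W i j)
    {i j : ι} (hj : ∑ k, W j k = 0) : W i j = 0 := by
  refine le_antisymm ?_ (hWnn i j)
  rw [← hW.apply, ← hj]
  exact single_le_sum (fun k _ => hWnn j k) (mem_univ i)

/-- The vector `x` of the paper. -/
noncomputable def posRowSumIndicator (W : Matrix ι ι ℝ) : ι → ℝ :=
  fun i => if 0 < ∑ j, W i j then 1 else 0

theorem mulVec_posRowSumIndicator (hW : W.IsSymm) (hWnn : ∀ i j, 0 ≤ W i j) :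
    W *ᵥ posRowSumIndicator W = fun i => ∑ j, W i j := by
  ext i
  refine sum_congr rfl fun j _ => ?_
  by_cases hj : 0 < ∑ k, W j k
  · simp [posRowSumIndicator, hj]
  · have hj0 : ∑ k, W j k = 0 := le_antisymm (not_lt.mp hj) (sum_nonneg fun k _ => hWnn j k)
    simp [posRowSumIndicator, hj, hW.apply_eq_zero_of_rowSum_eq_zero hWnn hj0]

theorem sqrt_mul_posRowSumIndicator_ne_zero (hWnn : ∀ i j, 0 ≤ W i j) (hWne : W ≠ 0)
    {d : ι → ℝ} (hd : ∀ i, 0 < ∑ j, W i j → d i = ∑ j, W i j) :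
    (fun i => √(d i) * posRowSumIndicator W i) ≠ 0 := by
  obtain ⟨i, j, hij⟩ : ∃ i j, W i j ≠ 0 := by simpa [← Matrix.ext_iff] using hWne
  have hi : 0 < ∑ k, W i k :=
    ((hWnn i j).lt_of_ne' hij).trans_le (single_le_sum (fun k _ => hWnn i k) (mem_univ j))
  intro h
  simpa [posRowSumIndicator, hi, hd i hi, Real.sqrt_eq_zero', not_le.mpr hi] using congrFun h i

variable [DecidableEq ι]

theorem Matrix.diagonal_mulVec_eq_mul {α : Type*} [NonUnitalNonAssocSemiring α] (s w : ι → α) :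
    diagonal s *ᵥ w = s * w :=
  funext (mulVec_diagonal s w)

theorem dotProduct_diagonal_mul_mul_diagonal_mulVec (s v : ι → ℝ) :
    v ⬝ᵥ (diagonal s * W * diagonal s) *ᵥ v = (s * v) ⬝ᵥ W *ᵥ (s * v) := by
  rw [← mulVec_mulVec, ← mulVec_mulVec, diagonal_mulVec_eq_mul, diagonal_mulVec_eq_mul]
  exact sum_congr rfl fun i _ => by simp only [Pi.mul_apply]; ring

theorem dotProduct_normalized_mulVec_le (hW : W.IsSymm) (hWnn : ∀ i j, 0 ≤ W i j) {d : ι → ℝ}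
    (hd_pos : ∀ i, 0 < d i) (hd_le : ∀ i, ∑ j, W i j ≤ d i) (v : ι → ℝ) :
    v ⬝ᵥ (diagonal (fun i => (√(d i))⁻¹) * W * diagonal fun i => (√(d i))⁻¹) *ᵥ v ≤ v ⬝ᵥ v := by
  rw [dotProduct_diagonal_mul_mul_diagonal_mulVec]
  calc _ ≤ ∑ i, (∑ j, W i j) * ((√(d i))⁻¹ * v i) ^ 2 :=
        dotProduct_mulVec_le_sum_rowSum_mul_sq hW hWnn _
    _ ≤ ∑ i, d i * ((√(d i))⁻¹ * v i) ^ 2 :=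
        sum_le_sum fun i _ => mul_le_mul_of_nonneg_right (hd_le i) (sq_nonneg _)
    _ = v ⬝ᵥ v := by
      refine sum_congr rfl fun i _ => ?_
      rw [mul_pow, inv_pow, Real.sq_sqrt (hd_pos i).le]
      field_simp [(hd_pos i).ne']

theorem normalized_mulVec_sqrt_mul_posRowSumIndicator (hW : W.IsSymm) (hWnn : ∀ i j, 0 ≤ W i j)
    {d : ι → ℝ} (hd : ∀ i, 0 < ∑ j, W i j → d i = ∑ j, W i j) :
    (diagonal (fun i => (√(d i))⁻¹) * W * diagonal fun i => (√(d i))⁻¹) *ᵥ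
      (fun i => √(d i) * posRowSumIndicator W i) = fun i => √(d i) * posRowSumIndicator W i := by
  have hunscale : (fun i => (√(d i))⁻¹) * (fun i => √(d i) * posRowSumIndicator W i) =
      posRowSumIndicator W := by
    ext i
    by_cases hi : 0 < ∑ j, W i j
    · have hsqrt : √(d i) ≠ 0 := by rw [hd i hi]; positivity
      simp [posRowSumIndicator, hi, hsqrt]
    · simp [posRowSumIndicator, hi]
  rw [← mulVec_mulVec, ← mulVec_mulVec,
    diagonal_mulVec_eq_mul _ fun i => √(d i) * posRowSumIndicator W i, hunscale,
    mulVec_posRowSumIndicator hW hWnn, diagonal_mulVec_eq_mul]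
  ext i
  by_cases hi : 0 < ∑ j, W i j
  · simp only [Pi.mul_apply, posRowSumIndicator, hi, if_true, mul_one, hd i hi]
    rw [inv_mul_eq_div, Real.div_sqrt]
  · have hi0 : ∑ j, W i j = 0 := le_antisymm (not_lt.mp hi) (sum_nonneg fun k _ => hWnn i k)
    simp [posRowSumIndicator, hi0]

end NormalizedAdjacency

theorem stmt_6_general (n : ℕ) (W : Matrix (Fin n) (Fin n) ℝ) (hW : W.IsSymm)
    (hWnn : ∀ i j, 0 ≤ W i j) (hWne : W ≠ 0)
    (α : ℝ) (hα0 : 0 < α)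
    (d : Fin n → ℝ) (hd : ∀ i, d i = if 0 < ∑ j, W i j then ∑ j, W i j else 1)
    (Dhalf : Matrix (Fin n) (Fin n) ℝ)
    (hDhalf : Dhalf = Matrix.diagonal fun i => (Real.sqrt (d i))⁻¹) :
    (1 - α) ∈ spectrum ℝ ((1 : Matrix (Fin n) (Fin n) ℝ) - α • (Dhalf * W * Dhalf)) ∧
    ∀ μ ∈ spectrum ℝ ((1 : Matrix (Fin n) (Fin n) ℝ) - α • (Dhalf * W * Dhalf)),
      1 - α ≤ μ := by
  subst hDhalf
  have hd_eq : ∀ i, 0 < ∑ j, W i j → d i = ∑ j, W i j := fun i hi => by rw [hd i, if_pos hi]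
  have hd_pos : ∀ i, 0 < d i := fun i => by
    rw [hd i]; split_ifs with hi
    exacts [hi, one_pos]
  have hd_le : ∀ i, ∑ j, W i j ≤ d i := fun i => by
    rw [hd i]; split_ifs with hi
    exacts [le_rfl, (not_lt.mp hi).trans zero_le_one]
  constructor
  · rw [mem_spectrum_iff_exists_mulVec_eq_smul]
    refine ⟨_, sqrt_mul_posRowSumIndicator_ne_zero hWnn hWne hd_eq, ?_⟩
    rw [sub_mulVec, one_mulVec, smul_mulVec,
      normalized_mulVec_sqrt_mul_posRowSumIndicator hW hWnn hd_eq, sub_smul, one_smul]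
  · refine fun μ => le_of_mem_spectrum_of_forall_le_dotProduct_mulVec fun v => ?_
    have hbound := dotProduct_normalized_mulVec_le hW hWnn hd_pos hd_le v
    rw [sub_mulVec, one_mulVec, smul_mulVec, dotProduct_sub, dotProduct_smul, smul_eq_mul]
    linarith [mul_le_mul_of_nonneg_left hbound hα0.le]

theorem stmt_6 (n : ℕ) (W : Matrix (Fin n) (Fin n) ℝ) (hW : W.IsSymm)
    (hWnn : ∀ i j, 0 ≤ W i j) (hWne : W ≠ 0)
    (α : ℝ) (hα0 : 0 < α) (hα1 : α < 1)
    (d : Fin n → ℝ) (hd : ∀ i, d i = if 0 < ∑ j, W i j then ∑ j, W i j else 1)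
    (Dhalf : Matrix (Fin n) (Fin n) ℝ)
    (hDhalf : Dhalf = Matrix.diagonal fun i => (Real.sqrt (d i))⁻¹) :
    (1 - α) ∈ spectrum ℝ ((1 : Matrix (Fin n) (Fin n) ℝ) - α • (Dhalf * W * Dhalf)) ∧
    ∀ μ ∈ spectrum ℝ ((1 : Matrix (Fin n) (Fin n) ℝ) - α • (Dhalf * W * Dhalf)),
      1 - α ≤ μ :=
  stmt_6_general n W hW hWnn hWne α hα0 d hd Dhalf hDhalf
end

section
/- The vector x defined by x_i = 1 if the i-th row sum of W is positive and x_i = 0 otherwise satisfies W x = D x, where D is the GeneRank diagonal matrix. -/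
theorem stmt_7 (n : ℕ) (W : Matrix (Fin n) (Fin n) ℝ) (hW : W.IsSymm)
    (hWnn : ∀ i j, 0 ≤ W i j)
    (d : Fin n → ℝ) (hd : ∀ i, d i = if 0 < ∑ j, W i j then ∑ j, W i j else 1)
    (x : Fin n → ℝ) (hx : ∀ i, x i = if 0 < ∑ j, W i j then 1 else 0) :
    W.mulVec x = (Matrix.diagonal d).mulVec x := by
  funext i
  have hsum : ∀ k, 0 ≤ ∑ j, W k j := fun k => Finset.sum_nonneg fun j _ => hWnn k j
  have hlhs : W.mulVec x i = ∑ j, W i j := by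
    rw [Matrix.mulVec, dotProduct]
    refine Finset.sum_congr rfl fun j _ => ?_
    rw [hx j]
    by_cases h : 0 < ∑ k, W j k
    · simp [h]
    · have hall : W i j = 0 := by
        by_contra hne
        have hpos : 0 < W i j := lt_of_le_of_ne (hWnn i j) (Ne.symm hne)
        have hji : 0 < W j i := by rwa [← Matrix.IsSymm.apply hW i j] at hpos
        have : 0 < ∑ k, W j k := by
          have := Finset.single_le_sum (f := fun k => W j k)
            (fun k _ => hWnn j k) (Finset.mem_univ i)
          linarith
        exact h this
      simp [hall]
  rw [hlhs, Matrix.mulVec_diagonal, hx i, hd i]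
  by_cases h : 0 < ∑ j, W i j
  · simp [h]
  · have : ∑ j, W i j = 0 := le_antisymm (not_lt.mp h) (hsum i)
    simp [h, this]
end

section
/- Let S be a real symmetric positive definite matrix whose largest eigenvalue satisfies λ_max ≤ 2 - λ_min (where λ_min is the smallest eigenvalue) and λ_min ≤ 1. Then the spectral condition number of T = 2S - S² is at most that of S: λ_max(T)/λ_min(T) ≤ λ_max(S)/λ_min(S). -/
/-!
By the spectral mapping theorem the spectrum of `T = 2S - S²` is the image of the spectrum
of `S` under `f x = x (2 - x)`. With `a = λ_min(S)` and `b = λ_max(S)`, every `x ∈ [a, b]`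
satisfies `a (2 - a) ≤ f x ≤ b (2 - a)`: the lower bound because `f x - f a = (x - a)(2 - a - x)`
and `x ≤ b ≤ 2 - a`, the upper one because `f x ≤ x (2 - a)`. The lower bound is attained at
`x = a`, so `κ(T) ≤ b (2 - a) / (a (2 - a)) = κ(S)`.
-/

open Set

lemma two_mul_sub_sq_mem_Icc {a b x : ℝ} (hx : 0 ≤ x) (hax : a ≤ x) (hxb : x ≤ b)
    (hb : b ≤ 2 - a) : 2 * x - x ^ 2 ∈ Icc (a * (2 - a)) (b * (2 - a)) := by
  constructor
  · nlinarith [mul_nonneg (sub_nonneg.mpr hax) (show 0 ≤ 2 - a - x by linarith)]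
  · nlinarith [mul_nonneg (sub_nonneg.mpr hxb) (show 0 ≤ 2 - a - x by linarith),
      mul_nonneg hx (sub_nonneg.mpr hax)]

lemma sSup_div_sInf_image_two_mul_sub_sq_le {s : Set ℝ} (hs : IsCompact s)
    (hs_nonneg : ∀ x ∈ s, 0 ≤ x) (hsup : sSup s ≤ 2 - sInf s) :
    sSup ((fun x => 2 * x - x ^ 2) '' s) / sInf ((fun x => 2 * x - x ^ 2) '' s) ≤
      sSup s / sInf s := by
  rcases s.eq_empty_or_nonempty with rfl | hne
  · simp
  set a := sInf s
  set b := sSup s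
  have ha : a ∈ s := hs.sInf_mem hne
  have hbounds : ∀ x ∈ s, 2 * x - x ^ 2 ∈ Icc (a * (2 - a)) (b * (2 - a)) := fun x hx =>
    two_mul_sub_sq_mem_Icc (hs_nonneg x hx) (csInf_le hs.bddBelow hx)
      (le_csSup hs.bddAbove hx) hsup
  have h2a : 0 < 2 - a := by linarith [hs_nonneg a ha, le_csSup hs.bddAbove ha]
  have hinf : sInf ((fun x => 2 * x - x ^ 2) '' s) = a * (2 - a) :=
    le_antisymm (csInf_le ((hs.image (by fun_prop)).bddBelow) ⟨a, ha, by ring⟩)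
      (le_csInf (hne.image _) (forall_mem_image.mpr fun x hx => (hbounds x hx).1))
  have hsup' : sSup ((fun x => 2 * x - x ^ 2) '' s) ≤ b * (2 - a) :=
    csSup_le (hne.image _) (forall_mem_image.mpr fun x hx => (hbounds x hx).2)
  calc sSup ((fun x => 2 * x - x ^ 2) '' s) / sInf ((fun x => 2 * x - x ^ 2) '' s)
      ≤ b * (2 - a) / (a * (2 - a)) := by
        rw [hinf]
        exact div_le_div_of_nonneg_right hsup' (by nlinarith [hs_nonneg a ha])
    _ = b / a := mul_div_mul_right b a h2a.ne'

lemma spectrum_two_smul_sub_mul_self {A : Type*} [Ring A] [StarRing A] [Algebra ℝ A]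
    [TopologicalSpace A] [ContinuousFunctionalCalculus ℝ A IsSelfAdjoint] {a : A}
    (ha : IsSelfAdjoint a) :
    spectrum ℝ (2 • a - a * a) = (fun x => 2 * x - x ^ 2) '' spectrum ℝ a := by
  have hcfc : cfc (fun x : ℝ => 2 * x - x ^ 2) a = 2 • a - a * a := by
    rw [cfc_sub (fun x : ℝ => 2 * x) (fun x : ℝ => x ^ 2) a, cfc_const_mul (2 : ℝ) (fun x => x) a,
      cfc_id' ℝ a, cfc_pow_id a 2, sq, ofNat_smul_eq_nsmul ℝ]
  rw [← hcfc]
  exact cfc_map_spectrum _ a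

theorem stmt_10_general (n : ℕ) (S : Matrix (Fin n) (Fin n) ℝ)
    (hSpd : S.PosDef)
    (hmax : sSup (spectrum ℝ S) ≤ 2 - sInf (spectrum ℝ S)) :
    sSup (spectrum ℝ (2 • S - S * S)) / sInf (spectrum ℝ (2 • S - S * S)) ≤
      sSup (spectrum ℝ S) / sInf (spectrum ℝ S) := by
  rw [spectrum_two_smul_sub_mul_self hSpd.isHermitian]
  exact sSup_div_sInf_image_two_mul_sub_sq_le (S.finite_real_spectrum (𝕜 := ℝ)).isCompact
    (Matrix.posSemidef_iff_isHermitian_and_spectrum_nonneg.mp hSpd.posSemidef).2 hmax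

theorem stmt_10 (n : ℕ) (S : Matrix (Fin n) (Fin n) ℝ) (hS : S.IsSymm)
    (hSpd : S.PosDef)
    (hmax : sSup (spectrum ℝ S) ≤ 2 - sInf (spectrum ℝ S))
    (hmin : sInf (spectrum ℝ S) ≤ 1) :
    sSup (spectrum ℝ (2 • S - S * S)) / sInf (spectrum ℝ (2 • S - S * S)) ≤
      sSup (spectrum ℝ S) / sInf (spectrum ℝ S) :=
  stmt_10_general n S hSpd hmax
end

section
/- If W ≠ 0 is symmetric nonnegative and D the GeneRank diagonal matrix, then for 0 < α < 1 the smallest eigenvalue of T_α = (I + αD^{-1/2}WD^{-1/2})(I - αD^{-1/2}WD^{-1/2}) equals 1 - α². -/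
/-!
Since `(1 + J)(1 - J) = 1 - J²`, the claim is that `α²` is the largest real eigenvalue of `J²`.
Conjugating by `D^{-1/2}` turns `J` into `α D⁻¹W`, whose absolute row sums are at most `|α|`;
so its `ℓ^∞` operator norm is at most `|α|`, and every real eigenvalue of its square is at most
`α²`. Conversely, by symmetry of `W`, the indicator vector of the vertices of positive degree is
fixed by `D⁻¹W`, hence is an eigenvector of `(α D⁻¹W)²` for `α²`.
-/

open Matrix

attribute [local instance] Matrix.linftyOpSeminormedAddCommGroup Matrix.linftyOpNormedRing
  Matrix.linftyOpNormedAlgebra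

lemma spectrum.mem_one_sub_iff {R A : Type*} [CommRing R] [Ring A] [Algebra R A] {a : A} {μ : R} :
    μ ∈ spectrum R (1 - a) ↔ 1 - μ ∈ spectrum R a := by
  rw [← map_one (algebraMap R A), ← spectrum.singleton_sub_eq, Set.singleton_sub]
  constructor
  · rintro ⟨x, hx, rfl⟩
    rwa [sub_sub_cancel]
  · exact fun h => ⟨_, h, sub_sub_cancel 1 μ⟩

lemma spectrum.eq_of_semiconjBy_units {R A : Type*} [CommSemiring R] [Ring A] [Algebra R A]
    {a b : A} {u : Aˣ} (h : SemiconjBy (u : A) a b) : spectrum R a = spectrum R b := by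
  rw [← spectrum.units_conjugate (u := u), h.eq, Units.mul_inv_cancel_right]

namespace Matrix

variable {ι : Type*} [Fintype ι]

lemma linfty_opNorm_le_of_forall_sum_norm_le {m α : Type*} [Fintype m] [SeminormedAddCommGroup α]
    {A : Matrix m ι α} {c : ℝ} (hc : 0 ≤ c) (h : ∀ i, ∑ j, ‖A i j‖ ≤ c) : ‖A‖ ≤ c := by
  lift c to NNReal using hc
  rw [linfty_opNorm_def, NNReal.coe_le_coe]
  exact Finset.sup_le fun i _ => by simpa [← NNReal.coe_le_coe] using h i

lemma mem_spectrum_of_mulVec_eq_smul {R : Type*} [CommRing R] [DecidableEq ι]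
    {A : Matrix ι ι R} {v : ι → R} {μ : R} (hv : v ≠ 0) (h : A *ᵥ v = μ • v) :
    μ ∈ spectrum R A := by
  rw [← spectrum_toLin']
  exact (Module.End.hasEigenvalue_of_hasEigenvector
    (Module.End.hasEigenvector_iff.2 ⟨by simpa [Module.End.mem_eigenspace_iff], hv⟩)).mem_spectrum

lemma norm_le_linfty_opNorm_of_mem_spectrum {𝕜 : Type*} [RCLike 𝕜] [DecidableEq ι]
    {A : Matrix ι ι 𝕜} {μ : 𝕜} (hμ : μ ∈ spectrum 𝕜 A) : ‖μ‖ ≤ ‖A‖ := by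
  cases isEmpty_or_nonempty ι
  · simp [spectrum.of_subsingleton] at hμ
  · exact spectrum.norm_le_norm_of_mem hμ

/-- The degree used by GeneRank: isolated vertices get degree `1`, so that `D` is invertible. -/
noncomputable def degreeOrOne (W : Matrix ι ι ℝ) (i : ι) : ℝ :=
  if 0 < ∑ j, W i j then ∑ j, W i j else 1

lemma degreeOrOne_pos (W : Matrix ι ι ℝ) (i : ι) : 0 < W.degreeOrOne i := by
  unfold degreeOrOne
  split_ifs with h
  · exact h
  · exact one_pos

lemma degreeOrOne_inv_mul_sum_le_one (W : Matrix ι ι ℝ) (i : ι) :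
    (W.degreeOrOne i)⁻¹ * ∑ j, W i j ≤ 1 := by
  unfold degreeOrOne
  split_ifs with h
  · rw [inv_mul_cancel₀ h.ne']
  · simpa using (not_lt.1 h).trans zero_le_one

variable [DecidableEq ι]

noncomputable def randomWalk (W : Matrix ι ι ℝ) : Matrix ι ι ℝ :=
  diagonal (fun i => (W.degreeOrOne i)⁻¹) * W

lemma randomWalk_apply (W : Matrix ι ι ℝ) (i j : ι) :
    W.randomWalk i j = (W.degreeOrOne i)⁻¹ * W i j :=
  diagonal_mul _ _ _ _

lemma norm_randomWalk_le_one {W : Matrix ι ι ℝ} (hW : ∀ i j, 0 ≤ W i j) :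
    ‖W.randomWalk‖ ≤ 1 := by
  refine linfty_opNorm_le_of_forall_sum_norm_le zero_le_one fun i => ?_
  have hnn j : 0 ≤ W.randomWalk i j := by
    rw [randomWalk_apply]
    exact mul_nonneg (inv_nonneg.2 (W.degreeOrOne_pos i).le) (hW i j)
  simp_rw [Real.norm_of_nonneg (hnn _), randomWalk_apply, ← Finset.mul_sum]
  exact W.degreeOrOne_inv_mul_sum_le_one i

lemma semiconjBy_randomWalk (W : Matrix ι ι ℝ) :
    SemiconjBy (diagonal fun i => (√(W.degreeOrOne i))⁻¹)
      (diagonal (fun i => (√(W.degreeOrOne i))⁻¹) * W * diagonal fun i => (√(W.degreeOrOne i))⁻¹)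
      W.randomWalk := by
  have hsq i : (√(W.degreeOrOne i))⁻¹ * (√(W.degreeOrOne i))⁻¹ = (W.degreeOrOne i)⁻¹ := by
    rw [← mul_inv, Real.mul_self_sqrt (W.degreeOrOne_pos i).le]
  simp only [SemiconjBy, randomWalk, ← Matrix.mul_assoc, diagonal_mul_diagonal, hsq]

lemma exists_randomWalk_mulVec_eq_self {W : Matrix ι ι ℝ} (hW : W.IsSymm)
    (hWnn : ∀ i j, 0 ≤ W i j) (hWne : W ≠ 0) : ∃ v ≠ 0, W.randomWalk *ᵥ v = v := by
  have hrow i (hi : ¬ 0 < ∑ j, W i j) j : W i j = 0 :=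
    (Finset.sum_eq_zero_iff_of_nonneg fun j _ => hWnn i j).1
      (le_antisymm (not_lt.1 hi) (Finset.sum_nonneg fun j _ => hWnn i j)) j (Finset.mem_univ j)
  set u : ι → ℝ := fun i => if 0 < ∑ j, W i j then 1 else 0
  -- by symmetry, the columns of isolated vertices vanish as well
  have hWu : W *ᵥ u = fun i => ∑ j, W i j := by
    funext i
    refine Finset.sum_congr rfl fun k _ => ?_
    by_cases hk : 0 < ∑ j, W k j
    · simp [u, hk]
    · simp [u, hk, hW.apply k i ▸ hrow k hk i]
  refine ⟨u, ?_, ?_⟩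
  · obtain ⟨i, j, hij⟩ : ∃ i j, W i j ≠ 0 := by
      by_contra! h
      exact hWne (Matrix.ext h)
    have hpos : 0 < ∑ k, W i k := Finset.sum_pos' (fun k _ => hWnn i k)
      ⟨j, Finset.mem_univ j, (hWnn i j).lt_of_ne' hij⟩
    exact fun h => by simpa [u, hpos] using congrFun h i
  · rw [randomWalk, ← mulVec_mulVec, hWu]
    funext i
    rw [mulVec_diagonal]
    by_cases hi : 0 < ∑ j, W i j
    · simp [u, hi, degreeOrOne, hi.ne']
    · simp [u, hrow i hi]

end Matrix

theorem stmt_11_general (n : ℕ) (W : Matrix (Fin n) (Fin n) ℝ) (hW : W.IsSymm)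
    (hWnn : ∀ i j, 0 ≤ W i j) (hWne : W ≠ 0)
    (α : ℝ)
    (d : Fin n → ℝ) (hd : ∀ i, d i = if 0 < ∑ j, W i j then ∑ j, W i j else 1)
    (Dhalf : Matrix (Fin n) (Fin n) ℝ)
    (hDhalf : Dhalf = Matrix.diagonal fun i => (Real.sqrt (d i))⁻¹)
    (J : Matrix (Fin n) (Fin n) ℝ) (hJ : J = α • (Dhalf * W * Dhalf)) :
    (1 - α ^ 2) ∈ spectrum ℝ ((1 + J) * (1 - J)) ∧
    ∀ μ ∈ spectrum ℝ ((1 + J) * (1 - J)), 1 - α ^ 2 ≤ μ := by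
  obtain rfl : d = W.degreeOrOne := funext hd
  set K := α • W.randomWalk
  have hDhalf_unit : IsUnit Dhalf := by
    rw [hDhalf, isUnit_diagonal, Pi.isUnit_iff]
    exact fun i => (inv_pos.2 (Real.sqrt_pos.2 (W.degreeOrOne_pos i))).ne'.isUnit
  have hJK : SemiconjBy Dhalf J K := hJ ▸ hDhalf ▸ W.semiconjBy_randomWalk.smul_right α
  have hspec : spectrum ℝ (J * J) = spectrum ℝ (K * K) :=
    spectrum.eq_of_semiconjBy_units (u := hDhalf_unit.unit) (hJK.mul_right hJK)
  have hT : (1 + J) * (1 - J) = 1 - J * J := by noncomm_ring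
  simp only [hT, spectrum.mem_one_sub_iff, sub_sub_cancel, hspec]
  constructor
  · obtain ⟨v, hv, hWv⟩ := W.exists_randomWalk_mulVec_eq_self hW hWnn hWne
    have hKv : K *ᵥ v = α • v := by rw [smul_mulVec, hWv]
    refine mem_spectrum_of_mulVec_eq_smul hv ?_
    rw [← mulVec_mulVec, hKv, mulVec_smul, hKv, smul_smul, sq]
  · intro μ hμ
    have hK : ‖K‖ ≤ |α| := by
      simpa [K, norm_smul] using mul_le_of_le_one_right (abs_nonneg α) (norm_randomWalk_le_one hWnn)
    suffices 1 - μ ≤ α ^ 2 by linarith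
    calc 1 - μ ≤ ‖1 - μ‖ := Real.le_norm_self _
      _ ≤ ‖K * K‖ := norm_le_linfty_opNorm_of_mem_spectrum hμ
      _ ≤ ‖K‖ * ‖K‖ := norm_mul_le _ _
      _ ≤ |α| * |α| := mul_self_le_mul_self (norm_nonneg _) hK
      _ = α ^ 2 := by rw [← sq, sq_abs]

theorem stmt_11 (n : ℕ) (W : Matrix (Fin n) (Fin n) ℝ) (hW : W.IsSymm)
    (hWnn : ∀ i j, 0 ≤ W i j) (hWne : W ≠ 0)
    (α : ℝ) (hα0 : 0 < α) (hα1 : α < 1)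
    (d : Fin n → ℝ) (hd : ∀ i, d i = if 0 < ∑ j, W i j then ∑ j, W i j else 1)
    (Dhalf : Matrix (Fin n) (Fin n) ℝ)
    (hDhalf : Dhalf = Matrix.diagonal fun i => (Real.sqrt (d i))⁻¹)
    (J : Matrix (Fin n) (Fin n) ℝ) (hJ : J = α • (Dhalf * W * Dhalf)) :
    (1 - α ^ 2) ∈ spectrum ℝ ((1 + J) * (1 - J)) ∧
    ∀ μ ∈ spectrum ℝ ((1 + J) * (1 - J)), 1 - α ^ 2 ≤ μ :=
  stmt_11_general n W hW hWnn hWne α d hd Dhalf hDhalf J hJ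
end
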